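/- arXiv:2605.23321 — 9 statements merged into one kernel-verified Lean document; each statement's English description precedes it below -/
import Mathlib

section
/- If the set A ⊆ ℤ/rℤ is k-symmetric, then for every valuation V, world w, and modal formula Φ, if ◇□Φ is true at w in the Frame-2 Kripke model, then Φ is true at w + k. -/
inductive MF : Type
  | var : MF
  | neg : MF → MF
  | box : MF → MF
  | dia : MF → MF

def Sat {W : Type} (R : W → W → Prop) (V : Set W) : W → MF → Prop
  | w, MF.var => w ∈ V
  | w, MF.neg φ => ¬ Sat R V w φ
  | w, MF.box φ => ∀ w', R w w' → Sat R V w' φ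
  | w, MF.dia φ => ∃ w', R w w' ∧ Sat R V w' φ

/-- Frame 2 accessibility relation: `w` accesses `w + a` for each `a ∈ A`. -/
def R2 (r : ℕ) (A : Set (ZMod r)) : ZMod r → ZMod r → Prop :=
  fun w w' => ∃ a ∈ A, w' = w + a

theorem stmt1 (r k : ℕ) (hr : 2 ≤ r) (hk : 1 ≤ k)
    (A : Set (ZMod r)) (hA : A.Nonempty)
    (hsym : ∀ a ∈ A, (k : ZMod r) - a ∈ A)
    (V : Set (ZMod r)) (w : ZMod r) (Φ : MF)
    (h : Sat (R2 r A) V w (MF.dia (MF.box Φ))) :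
    Sat (R2 r A) V (w + (k : ZMod r)) Φ := by
  obtain ⟨w', ⟨a, ha, hw'⟩, hbox⟩ := h
  have := hbox (w' + ((k : ZMod r) - a)) ⟨_, hsym a ha, rfl⟩
  have e : w' + ((k : ZMod r) - a) = w + (k : ZMod r) := by
    subst hw'; ring
  rwa [e] at this
end

section
/- Semantic reduction theorem: if A ⊆ ℤ/rℤ is k-symmetric, then for every valuation V, world w ∈ ℤ/rℤ, and modal formula Φ, the formula □◇□Φ is true at w in the Frame-2 model (ℤ/rℤ, R, V) if and only if □Φ is true at w + k. -/
theorem stmt2 (r k : ℕ) (hr : 2 ≤ r) (hk : 1 ≤ k)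
    (A : Set (ZMod r)) (hA : A.Nonempty)
    (hsym : ∀ a ∈ A, (k : ZMod r) - a ∈ A)
    (V : Set (ZMod r)) (w : ZMod r) (Φ : MF) :
    Sat (R2 r A) V w (MF.box (MF.dia (MF.box Φ))) ↔
      Sat (R2 r A) V (w + (k : ZMod r)) (MF.box Φ) := by
  constructor
  · intro h w' hw'
    obtain ⟨a, ha, rfl⟩ := hw'
    obtain ⟨u, hu, hb⟩ := h (w + a) ⟨a, ha, rfl⟩
    obtain ⟨b, hb', rfl⟩ := hu
    have := hb (w + a + b + ((k : ZMod r) - b)) ⟨_, hsym b hb', rfl⟩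
    have heq : w + a + b + ((k : ZMod r) - b) = w + (k : ZMod r) + a := by ring
    rwa [heq] at this
  · intro h w' hw'
    obtain ⟨a, ha, rfl⟩ := hw'
    refine ⟨w + a + ((k : ZMod r) - a), ⟨_, hsym a ha, rfl⟩, ?_⟩
    intro w'' hw''
    apply h
    have heq : w + a + ((k : ZMod r) - a) = w + (k : ZMod r) := by ring
    rwa [heq] at hw''
end

section
/- In Frame 2 with k-symmetric A, for every valuation V and every j ≥ 0, the formula (□◇)^j □p is true at world 0 if and only if the translate A + j·k is contained in the valuation V. -/
lemma stmt3_aux (r k : ℕ) (A : Set (ZMod r))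
    (hsym : ∀ a ∈ A, (k : ZMod r) - a ∈ A)
    (V : Set (ZMod r)) :
    ∀ j : ℕ, ∀ w : ZMod r,
      Sat (R2 r A) V w ((fun ψ => MF.box (MF.dia ψ))^[j] (MF.box MF.var)) ↔
        ∀ a ∈ A, w + a + (j : ZMod r) * (k : ZMod r) ∈ V := by
  intro j
  induction j with
  | zero =>
    intro w
    simp only [Function.iterate_zero, id_eq, Sat, R2, Nat.cast_zero, zero_mul, add_zero]
    constructor
    · intro h a ha
      exact h (w + a) ⟨a, ha, rfl⟩
    · rintro h w' ⟨a, ha, rfl⟩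
      exact h a ha
  | succ j ih =>
    intro w
    rw [Function.iterate_succ_apply']
    show (∀ w', R2 r A w w' → ∃ w'', R2 r A w' w'' ∧ Sat (R2 r A) V w'' _) ↔ _
    constructor
    · intro h a ha
      obtain ⟨w'', ⟨b, hb, rfl⟩, hs⟩ := h (w + a) ⟨a, ha, rfl⟩
      have := (ih _).mp hs ((k : ZMod r) - b) (hsym b hb)
      have heq : w + a + b + ((k : ZMod r) - b) + (j : ZMod r) * k
          = w + a + ((j : ZMod r) + 1) * k := by ring
      rw [heq] at this
      simpa [Nat.cast_succ] using this
    · rintro h w' ⟨a, ha, rfl⟩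
      refine ⟨w + a + ((k : ZMod r) - a), ⟨_, hsym a ha, rfl⟩, (ih _).mpr ?_⟩
      intro c hc
      have := h c hc
      have heq : w + a + ((k : ZMod r) - a) + c + (j : ZMod r) * k
          = w + c + ((j : ZMod r) + 1) * k := by ring
      rw [heq]
      simpa [Nat.cast_succ] using this

theorem stmt3 (r k : ℕ) (hr : 2 ≤ r) (hk : 1 ≤ k)
    (A : Set (ZMod r)) (hA : A.Nonempty)
    (hsym : ∀ a ∈ A, (k : ZMod r) - a ∈ A)
    (V : Set (ZMod r)) (j : ℕ) :
    Sat (R2 r A) V 0 ((fun ψ => MF.box (MF.dia ψ))^[j] (MF.box MF.var)) ↔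
      (fun a => a + (j : ZMod r) * (k : ZMod r)) '' A ⊆ V := by
  rw [stmt3_aux r k A hsym V j 0]
  constructor
  · rintro h x ⟨a, ha, rfl⟩
    simpa using h a ha
  · intro h a ha
    simpa using h ⟨a, ha, rfl⟩
end

section
/- Suppose {P_w : w ∈ J₊} ∪ {¬P_{w₀} : w₀ ∈ J₋} is satisfiable. Then {P_w : w ∈ J₊} ∪ {¬P_{w₀} : w₀ ∈ J₋} ∪ {P_m} is unsatisfiable if and only if there exists w₀ ∈ J₋ with (A + w₀) ∩ (A + m) ≠ ∅ and A + w₀ ⊆ ⋃_{w ∈ J₊ ∪ {m}} (A + w). -/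
/-- The translate `A + w = {a + w : a ∈ A}` in `ℤ/rℤ`. -/
def shiftA (r : ℕ) (A : Set (ZMod r)) (w : ZMod r) : Set (ZMod r) :=
  (· + w) '' A

theorem stmt6 (r : ℕ) (hr : 2 ≤ r) (A : Set (ZMod r)) (hA : A.Nonempty)
    (Jp Jm : Set (ZMod r)) (m : ZMod r) (hm : m ∉ Jp ∪ Jm)
    (hsat : ∃ V : Set (ZMod r),
      (∀ w ∈ Jp, shiftA r A w ⊆ V) ∧ (∀ w₀ ∈ Jm, ¬ shiftA r A w₀ ⊆ V)) :
    (¬ ∃ V : Set (ZMod r),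
        (∀ w ∈ Jp, shiftA r A w ⊆ V) ∧ (∀ w₀ ∈ Jm, ¬ shiftA r A w₀ ⊆ V) ∧
          shiftA r A m ⊆ V) ↔
      ∃ w₀ ∈ Jm, (shiftA r A w₀ ∩ shiftA r A m).Nonempty ∧
        shiftA r A w₀ ⊆ ⋃ w ∈ Jp ∪ {m}, shiftA r A w := by
  constructor
  · intro hunsat
    by_contra hno
    push_neg at hno
    obtain ⟨V, hVp, hVm⟩ := hsat
    refine hunsat ⟨(V ∩ ⋃ w ∈ Jp, shiftA r A w) ∪ shiftA r A m, ?_, ?_, fun x hx => Or.inr hx⟩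
    · intro w hw x hx
      exact Or.inl ⟨hVp w hw hx, Set.mem_biUnion hw hx⟩
    · intro w₀ hw₀ hsub
      by_cases hint : (shiftA r A w₀ ∩ shiftA r A m).Nonempty
      · refine hno w₀ hw₀ hint fun x hx => ?_
        rcases hsub hx with ⟨hxV, hxU⟩ | hxm
        · simp only [Set.mem_iUnion] at hxU ⊢
          obtain ⟨w, hw, hxw⟩ := hxU
          exact ⟨w, Or.inl hw, hxw⟩
        · exact Set.mem_biUnion (Set.mem_union_right _ rfl) hxm
      · refine hVm w₀ hw₀ fun x hx => ?_
        rcases hsub hx with ⟨hxV, _⟩ | hxm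
        · exact hxV
        · exact absurd ⟨x, hx, hxm⟩ hint
  · rintro ⟨w₀, hw₀, hint, hcov⟩ ⟨V, hVp, hVm, hVmm⟩
    refine hVm w₀ hw₀ fun x hx => ?_
    rcases Set.mem_iUnion₂.mp (hcov hx) with ⟨w, hw, hxw⟩
    rcases hw with hw | hw
    · exact hVp w hw hxw
    · exact hVmm (hw ▸ hxw)
end

section
/- Let A = [0, k] ⊆ ℤ/rℤ (residues of 0,1,...,k), and let J₊ ⊆ ℤ/rℤ. For w ∈ ℤ/rℤ define cvle(w) = min{t ∈ {0,...,k} : w - t ∈ J₊} and cvri(w) = min{t ∈ {0,...,k} : w + t ∈ J₊}, each set to k+1 if the minimum is over an empty set. Then A + w ⊆ ⋃_{w₀ ∈ J₊} (A + w₀) if and only if cvle(w) + cvri(w) ≤ k + 1. -/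
/-- `cvle`: distance to the nearest element of `J₊` within `k` steps to the left
(`k+1` if there is none). -/
noncomputable def cvle (r k : ℕ) (Jp : Set (ZMod r)) (w : ZMod r) : ℕ :=
  sInf ({t : ℕ | t ≤ k ∧ w - (t : ZMod r) ∈ Jp} ∪ {k + 1})

/-- `cvri`: distance to the nearest element of `J₊` within `k` steps to the right
(`k+1` if there is none). -/
noncomputable def cvri (r k : ℕ) (Jp : Set (ZMod r)) (w : ZMod r) : ℕ :=
  sInf ({t : ℕ | t ≤ k ∧ w + (t : ZMod r) ∈ Jp} ∪ {k + 1})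

lemma cvle_le {r k : ℕ} {Jp : Set (ZMod r)} {w : ZMod r} {t : ℕ}
    (h1 : t ≤ k) (h2 : w - (t : ZMod r) ∈ Jp) : cvle r k Jp w ≤ t :=
  Nat.sInf_le (Or.inl ⟨h1, h2⟩)

lemma cvri_le {r k : ℕ} {Jp : Set (ZMod r)} {w : ZMod r} {t : ℕ}
    (h1 : t ≤ k) (h2 : w + (t : ZMod r) ∈ Jp) : cvri r k Jp w ≤ t :=
  Nat.sInf_le (Or.inl ⟨h1, h2⟩)

lemma cvle_le_succ (r k : ℕ) (Jp : Set (ZMod r)) (w : ZMod r) : cvle r k Jp w ≤ k + 1 :=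
  Nat.sInf_le (Or.inr rfl)

lemma cvri_le_succ (r k : ℕ) (Jp : Set (ZMod r)) (w : ZMod r) : cvri r k Jp w ≤ k + 1 :=
  Nat.sInf_le (Or.inr rfl)

lemma cvle_spec (r k : ℕ) (Jp : Set (ZMod r)) (w : ZMod r) :
    cvle r k Jp w = k + 1 ∨ (cvle r k Jp w ≤ k ∧ w - (cvle r k Jp w : ZMod r) ∈ Jp) := by
  have := Nat.sInf_mem (s := {t : ℕ | t ≤ k ∧ w - (t : ZMod r) ∈ Jp} ∪ {k + 1})
    ⟨k + 1, Or.inr rfl⟩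
  rcases this with h | h
  · exact Or.inr h
  · exact Or.inl h

lemma cvri_spec (r k : ℕ) (Jp : Set (ZMod r)) (w : ZMod r) :
    cvri r k Jp w = k + 1 ∨ (cvri r k Jp w ≤ k ∧ w + (cvri r k Jp w : ZMod r) ∈ Jp) := by
  have := Nat.sInf_mem (s := {t : ℕ | t ≤ k ∧ w + (t : ZMod r) ∈ Jp} ∪ {k + 1})
    ⟨k + 1, Or.inr rfl⟩
  rcases this with h | h
  · exact Or.inr h
  · exact Or.inl h

lemma mem_shiftA {r k : ℕ} {w x : ZMod r} :
    x ∈ shiftA r ((fun i : ℕ => (i : ZMod r)) '' {i : ℕ | i ≤ k}) w ↔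
      ∃ i : ℕ, i ≤ k ∧ (i : ZMod r) + w = x := by
  simp only [shiftA, Set.mem_image, Set.mem_setOf_eq]
  constructor
  · rintro ⟨y, ⟨i, hi, rfl⟩, rfl⟩; exact ⟨i, hi, rfl⟩
  · rintro ⟨i, hi, rfl⟩; exact ⟨(i : ZMod r), ⟨i, hi, rfl⟩, rfl⟩

theorem stmt7 (r k : ℕ) (hk : 1 ≤ k) (hr : 3 * k < r) (hco : Nat.Coprime r k)
    (Jp : Set (ZMod r)) (w : ZMod r) :
    shiftA r ((fun i : ℕ => (i : ZMod r)) '' {i : ℕ | i ≤ k}) w ⊆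
        ⋃ w₀ ∈ Jp, shiftA r ((fun i : ℕ => (i : ZMod r)) '' {i : ℕ | i ≤ k}) w₀ ↔
      cvle r k Jp w + cvri r k Jp w ≤ k + 1 := by
  constructor
  · intro hcov
    set a := cvle r k Jp w with ha
    set b := cvri r k Jp w with hb
    have hak : a ≤ k + 1 := cvle_le_succ r k Jp w
    have hbk : b ≤ k + 1 := cvri_le_succ r k Jp w
    by_cases ha0 : a = 0
    · omega
    have ha1 : 1 ≤ a := Nat.one_le_iff_ne_zero.mpr ha0
    set i := k + 1 - a with hi
    have hik : i ≤ k := by omega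
    have hmem : (i : ZMod r) + w ∈
        shiftA r ((fun i : ℕ => (i : ZMod r)) '' {i : ℕ | i ≤ k}) w :=
      mem_shiftA.mpr ⟨i, hik, rfl⟩
    have := hcov hmem
    simp only [Set.mem_iUnion] at this
    obtain ⟨w₀, hw₀, hmem'⟩ := this
    obtain ⟨j, hjk, hj⟩ := mem_shiftA.mp hmem'
    by_cases hji : j ≤ i
    · have hcast : w + ((i - j : ℕ) : ZMod r) = w₀ := by
        push_cast [Nat.cast_sub hji]
        linear_combination -hj
      have hble : b ≤ i - j := cvri_le (by omega) (hcast ▸ hw₀)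
      omega
    · have hji' : i ≤ j := le_of_not_ge hji
      have hcast : w - ((j - i : ℕ) : ZMod r) = w₀ := by
        push_cast [Nat.cast_sub hji']
        linear_combination -hj
      have : a ≤ j - i := cvle_le (by omega) (hcast ▸ hw₀)
      omega
  · intro h
    set a := cvle r k Jp w with ha
    set b := cvri r k Jp w with hb
    have hA := cvle_spec r k Jp w
    have hB := cvri_spec r k Jp w
    rw [← ha] at hA
    rw [← hb] at hB
    have hwmem : ∀ t : ZMod r, w = t → t ∈ Jp → False → True := fun _ _ _ _ => trivial
    -- resolve attainment
    have hA' : a ≤ k ∧ w - (a : ZMod r) ∈ Jp := by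
      rcases hA with h1 | h1
      · exfalso
        have hb0 : b = 0 := by omega
        rcases hB with h2 | h2
        · omega
        · rw [hb0] at h2
          have : w - ((0 : ℕ) : ZMod r) ∈ Jp := by simpa using h2.2
          have := cvle_le (t := 0) (Nat.zero_le k) this
          omega
      · exact h1
    have hB' : b ≤ k ∧ w + (b : ZMod r) ∈ Jp := by
      rcases hB with h2 | h2
      · exfalso
        have ha0 : a = 0 := by omega
        rw [ha0] at hA'
        have : w + ((0 : ℕ) : ZMod r) ∈ Jp := by simpa using hA'.2
        have := cvri_le (t := 0) (Nat.zero_le k) this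
        omega
      · exact h2
    intro x hx
    obtain ⟨i, hik, rfl⟩ := mem_shiftA.mp hx
    simp only [Set.mem_iUnion]
    by_cases hbi : b ≤ i
    · refine ⟨w + (b : ZMod r), hB'.2, mem_shiftA.mpr ⟨i - b, by omega, ?_⟩⟩
      push_cast [Nat.cast_sub hbi]
      ring
    · refine ⟨w - (a : ZMod r), hA'.2, mem_shiftA.mpr ⟨i + a, by omega, ?_⟩⟩
      push_cast
      ring
end

section
/- If (w₀, w₁, S₀) is a pointed minimal cover, then the set {¬P_{w₀}} ∪ {P_s : s ∈ S₀} is minimally inconsistent: it is unsatisfiable, and every proper subset is satisfiable. -/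
/-- A pointed minimal cover `(w₀, w₁, S₀)`. -/
def PointedMinimalCover (r : ℕ) (A : Set (ZMod r)) (w₀ w₁ : ZMod r)
    (S₀ : Set (ZMod r)) : Prop :=
  S₀.Nontrivial ∧ w₁ ∈ S₀ ∧
    (∀ S₁ ⊆ S₀, (shiftA r A w₀ ⊆ ⋃ s ∈ S₁, shiftA r A s) ↔ S₁ = S₀) ∧
    ¬ shiftA r A w₁ ⊆ ⋃ w ∈ (S₀ \ {w₁}) ∪ {w₀}, shiftA r A w

theorem stmt8 (r : ℕ) (hr : 2 ≤ r) (A : Set (ZMod r)) (hA : A.Nonempty)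
    (w₀ w₁ : ZMod r) (S₀ : Set (ZMod r))
    (hpmc : PointedMinimalCover r A w₀ w₁ S₀) :
    -- the full set {¬P_{w₀}} ∪ {P_s : s ∈ S₀} is unsatisfiable
    (¬ ∃ V : Set (ZMod r), ¬ shiftA r A w₀ ⊆ V ∧ ∀ s ∈ S₀, shiftA r A s ⊆ V) ∧
    -- every proper subset is satisfiable: subsets omitting ¬P_{w₀}
    (∀ S₁ ⊆ S₀, ∃ V : Set (ZMod r), ∀ s ∈ S₁, shiftA r A s ⊆ V) ∧
    -- and subsets keeping ¬P_{w₀} but omitting some P_s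
    (∀ S₁ ⊆ S₀, S₁ ≠ S₀ →
      ∃ V : Set (ZMod r), ¬ shiftA r A w₀ ⊆ V ∧ ∀ s ∈ S₁, shiftA r A s ⊆ V) := by
  obtain ⟨hnt, hw₁, hmin, hirr⟩ := hpmc
  refine ⟨?_, ?_, ?_⟩
  · rintro ⟨V, hV₀, hVs⟩
    apply hV₀
    have hcov : shiftA r A w₀ ⊆ ⋃ s ∈ S₀, shiftA r A s := (hmin S₀ le_rfl).2 rfl
    exact hcov.trans (Set.iUnion₂_subset hVs)
  · intro S₁ _
    exact ⟨Set.univ, fun s _ => Set.subset_univ _⟩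
  · intro S₁ hS₁ hne
    refine ⟨⋃ s ∈ S₁, shiftA r A s, ?_, fun s hs => Set.subset_biUnion_of_mem hs⟩
    intro hsub
    exact hne ((hmin S₁ hS₁).1 hsub)
end

section
/- Suppose r and k are coprime, 1 ≤ k < r/3, and {0, k} ⊆ A ⊆ [0, k] ⊆ ℤ/rℤ. Then for every w ∈ ℤ/rℤ there exists S₀ ⊆ ℤ/rℤ with |S₀| ≥ 2 and w + k̄ ∈ S₀ such that (w, w + k̄, S₀) is a pointed minimal cover. -/
theorem Set.Finite.exists_minimal_subcover {ι α : Type*} {T : ι → Set α} {X : Set α} {S : Set ι}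
    (hS : S.Finite) (hX : X ⊆ ⋃ s ∈ S, T s) :
    ∃ S₀ ⊆ S, ∀ S₁ ⊆ S₀, (X ⊆ ⋃ s ∈ S₁, T s ↔ S₁ = S₀) := by
  have hfin : {S' | S' ⊆ S ∧ X ⊆ ⋃ s ∈ S', T s}.Finite :=
    hS.finite_subsets.subset fun _ h ↦ h.1
  obtain ⟨S₀, -, hmin⟩ := hfin.exists_le_minimal (a := S) ⟨subset_rfl, hX⟩
  refine ⟨S₀, hmin.prop.1, fun S₁ hS₁ ↦ ⟨fun hcov ↦ ?_, ?_⟩⟩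
  · exact hmin.eq_of_le ⟨hS₁.trans hmin.prop.1, hcov⟩ hS₁
  · rintro rfl
    exact hmin.prop.2

section

variable {r k : ℕ} {A : Set (ZMod r)}

theorem mem_shiftA_s9 {x s : ZMod r} : x ∈ shiftA r A s ↔ x - s ∈ A :=
  ⟨by rintro ⟨a, ha, rfl⟩; simpa using ha, fun h ↦ ⟨x - s, h, sub_add_cancel x s⟩⟩

theorem add_mem_shiftA {a : ZMod r} (ha : a ∈ A) (s : ZMod r) : s + a ∈ shiftA r A s :=
  ⟨a, ha, add_comm a s⟩

theorem le_and_le_of_intCast_mem (hA : A ⊆ (fun i : ℕ => (i : ZMod r)) '' {i : ℕ | i ≤ k})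
    {m : ℤ} (hm : (m : ZMod r) ∈ A) (hlo : (k : ℤ) - r < m) (hhi : m < r) : 0 ≤ m ∧ m ≤ k := by
  obtain ⟨n, hn, hnm⟩ := hA hm
  have hdvd : (r : ℤ) ∣ m - n := (ZMod.intCast_eq_intCast_iff_dvd_sub _ _ _).1 (by simpa using hnm)
  have hn : n ≤ k := hn
  have : m - n = 0 := Int.eq_zero_of_abs_lt_dvd hdvd (abs_lt.2 ⟨by omega, by omega⟩)
  omega

theorem le_and_le_of_add_mem_shiftA (hA : A ⊆ (fun i : ℕ => (i : ZMod r)) '' {i : ℕ | i ≤ k})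
    {w : ZMod r} {i d : ℤ} (h : w + i ∈ shiftA r A (w + d)) (hlo : (k : ℤ) - r < i - d)
    (hhi : i - d < r) : d ≤ i ∧ i ≤ d + k := by
  have hmem : ((i - d : ℤ) : ZMod r) ∈ A := by
    rw [mem_shiftA_s9, add_sub_add_left_eq_sub] at h
    exact_mod_cast h
  have := le_and_le_of_intCast_mem hA hmem hlo hhi
  omega

variable (r k) in
def candidateShifts (w : ZMod r) : Set (ZMod r) :=
  insert (w + k) ((fun j : ℤ ↦ w + j) '' Set.Ico (-(k : ℤ)) 0)

theorem candidateShifts_finite (w : ZMod r) : (candidateShifts r k w).Finite :=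
  ((Set.finite_Ico _ _).image _).insert _

theorem shiftA_subset_biUnion_candidateShifts (h0 : (0 : ZMod r) ∈ A) (hkA : (k : ZMod r) ∈ A)
    (hA : A ⊆ (fun i : ℕ => (i : ZMod r)) '' {i : ℕ | i ≤ k}) (w : ZMod r) :
    shiftA r A w ⊆ ⋃ s ∈ candidateShifts r k w, shiftA r A s := by
  rintro x ⟨a, ha, rfl⟩
  obtain ⟨n, hn, rfl⟩ := hA ha
  rcases (show n ≤ k from hn).eq_or_lt with rfl | hnk
  · exact Set.mem_biUnion (Set.mem_insert _ _) (mem_shiftA_s9.2 (by simpa [add_comm] using h0))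
  · refine Set.mem_biUnion (Set.mem_insert_of_mem _ ⟨(n : ℤ) - k, ⟨by omega, by omega⟩, rfl⟩) ?_
    exact mem_shiftA_s9.2 (by simpa [add_comm] using hkA)

theorem eq_of_add_mem_shiftA_of_mem_candidateShifts
    (hA : A ⊆ (fun i : ℕ => (i : ZMod r)) '' {i : ℕ | i ≤ k}) (hr : 2 * k < r) {w s : ZMod r}
    (hs : s ∈ candidateShifts r k w) (h : w + k ∈ shiftA r A s) : s = w + k := by
  rcases hs with rfl | ⟨j, ⟨hj₁, hj₂⟩, rfl⟩
  · rfl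
  · have := le_and_le_of_add_mem_shiftA hA (i := k) (by simpa using h) (by omega) (by omega)
    omega

theorem notMem_shiftA_add (hA : A ⊆ (fun i : ℕ => (i : ZMod r)) '' {i : ℕ | i ≤ k})
    (hk : 1 ≤ k) (hr : 2 * k < r) (w : ZMod r) : w ∉ shiftA r A (w + k) := fun h ↦ by
  have := le_and_le_of_add_mem_shiftA hA (i := 0) (d := k) (by simpa using h) (by omega) (by omega)
  omega

theorem add_add_notMem_shiftA (hA : A ⊆ (fun i : ℕ => (i : ZMod r)) '' {i : ℕ | i ≤ k})
    (hk : 1 ≤ k) (hr : 3 * k < r) {w s : ZMod r} (hs : s ∈ candidateShifts r k w \ {w + k} ∪ {w}) :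
    w + k + k ∉ shiftA r A s := fun h ↦ by
  replace h : w + ((2 * k : ℤ) : ZMod r) ∈ shiftA r A s := by
    push_cast
    rwa [two_mul, ← add_assoc]
  rcases hs with ⟨rfl | ⟨j, ⟨hj₁, hj₂⟩, rfl⟩, hne⟩ | rfl
  · exact hne rfl
  · have := le_and_le_of_add_mem_shiftA hA (i := 2 * k) (by simpa using h) (by omega) (by omega)
    omega
  · have := le_and_le_of_add_mem_shiftA hA (i := 2 * k) (d := 0) (by simpa using h)
      (by omega) (by omega)
    omega

end

theorem stmt9_general (r k : ℕ) (hk : 1 ≤ k) (hr : 3 * k < r)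
    (A : Set (ZMod r)) (h0 : (0 : ZMod r) ∈ A) (hkA : (k : ZMod r) ∈ A)
    (hAsub : A ⊆ (fun i : ℕ => (i : ZMod r)) '' {i : ℕ | i ≤ k}) :
    ∀ w : ZMod r, ∃ S₀ : Set (ZMod r), S₀.Nontrivial ∧ w + (k : ZMod r) ∈ S₀ ∧
      PointedMinimalCover r A w (w + (k : ZMod r)) S₀ := by
  intro w
  obtain ⟨S₀, hS₀, hmin⟩ := (candidateShifts_finite w).exists_minimal_subcover
    (shiftA_subset_biUnion_candidateShifts h0 hkA hAsub w)
  have hcover := (hmin S₀ subset_rfl).2 rfl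
  have hwk : w + (k : ZMod r) ∈ S₀ := by
    obtain ⟨s, hs, hks⟩ := Set.mem_iUnion₂.1 (hcover (add_mem_shiftA hkA w))
    rwa [← eq_of_add_mem_shiftA_of_mem_candidateShifts hAsub (by omega) (hS₀ hs) hks]
  have hnt : S₀.Nontrivial := by
    obtain ⟨s, hs, hws⟩ := Set.mem_iUnion₂.1 (hcover (by simpa using add_mem_shiftA h0 w))
    exact ⟨s, hs, _, hwk, by rintro rfl; exact notMem_shiftA_add hAsub hk (by omega) w hws⟩
  refine ⟨S₀, hnt, hwk, hnt, hwk, hmin, fun hirr ↦ ?_⟩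
  obtain ⟨s, hs, h2k⟩ := Set.mem_iUnion₂.1 (hirr (add_mem_shiftA hkA _))
  exact add_add_notMem_shiftA hAsub hk hr
    (Set.union_subset_union_left _ (Set.sdiff_subset_sdiff_left hS₀) hs) h2k

theorem stmt9 (r k : ℕ) (hco : Nat.Coprime r k) (hk : 1 ≤ k) (hr : 3 * k < r)
    (A : Set (ZMod r)) (h0 : (0 : ZMod r) ∈ A) (hkA : (k : ZMod r) ∈ A)
    (hAsub : A ⊆ (fun i : ℕ => (i : ZMod r)) '' {i : ℕ | i ≤ k}) :
    ∀ w : ZMod r, ∃ S₀ : Set (ZMod r), S₀.Nontrivial ∧ w + (k : ZMod r) ∈ S₀ ∧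
      PointedMinimalCover r A w (w + (k : ZMod r)) S₀ :=
  stmt9_general r k hk hr A h0 hkA hAsub
end

section
/- In the judgment-aggregation setting, Positive-Negative Neutrality implies Independence: if for all profiles f, g and all agenda formulas Φ, f⁻¹(Φ) = g⁻¹(¬Φ) implies (Φ ∈ F(f) ⇔ ¬Φ ∈ F(g)), then for all profiles f, g and formulas Φ, f⁻¹(Φ) = g⁻¹(Φ) implies (Φ ∈ F(f) ⇔ Φ ∈ F(g)). (Assume that for every Φ in the agenda, both {Φ} and {¬Φ} extend to rational judgment sets.) -/
/-- `Δ` is consistent: some valuation makes all its formulas true at `w₀`. -/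
def Consistent {W : Type} (R : W → W → Prop) (w₀ : W) (Δ : Set MF) : Prop :=
  ∃ V : Set W, ∀ Φ ∈ Δ, Sat R V w₀ Φ

/-- `Δ` is a rational judgment set: a complete and consistent subset of the agenda `Γ`. -/
def Rational {W : Type} (R : W → W → Prop) (w₀ : W) (Γ Δ : Set MF) : Prop :=
  Δ ⊆ Γ ∧ (∀ Φ ∈ Γ, Φ ∈ Δ ∨ MF.neg Φ ∈ Δ) ∧ Consistent R w₀ Δ

theorem stmt15 {W N : Type} [Fintype N] (hN : 2 ≤ Fintype.card N)
    (R : W → W → Prop) (w₀ : W) (Γ : Set MF)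
    (hneg : ∀ Φ ∈ Γ, MF.neg Φ ∈ Γ)
    (F : (N → Set MF) → Set MF)
    (hF : ∀ f : N → Set MF, (∀ i, Rational R w₀ Γ (f i)) → Rational R w₀ Γ (F f))
    (hext : ∀ Φ ∈ Γ, (∃ Γ₁, Rational R w₀ Γ Γ₁ ∧ Φ ∈ Γ₁) ∧
      (∃ Γ₂, Rational R w₀ Γ Γ₂ ∧ MF.neg Φ ∈ Γ₂))
    (hPNN : ∀ f g : N → Set MF, (∀ i, Rational R w₀ Γ (f i)) →
      (∀ i, Rational R w₀ Γ (g i)) → ∀ Φ ∈ Γ,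
      {i | Φ ∈ f i} = {i | MF.neg Φ ∈ g i} → (Φ ∈ F f ↔ MF.neg Φ ∈ F g)) :
    ∀ f g : N → Set MF, (∀ i, Rational R w₀ Γ (f i)) →
      (∀ i, Rational R w₀ Γ (g i)) → ∀ Φ ∈ Γ,
      {i | Φ ∈ f i} = {i | Φ ∈ g i} → (Φ ∈ F f ↔ Φ ∈ F g) := by
  intro f g hf hg Φ hΦ hset
  classical
  obtain ⟨⟨Γ₁, hΓ₁, hΦ₁⟩, ⟨Γ₂, hΓ₂, hΦ₂⟩⟩ := hext Φ hΦ
  have hcons : ∀ Δ, Consistent R w₀ Δ → ¬(Φ ∈ Δ ∧ MF.neg Φ ∈ Δ) := by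
    rintro Δ ⟨V, hV⟩ ⟨h1, h2⟩
    exact hV _ h2 (hV _ h1)
  set h : N → Set MF := fun i => if Φ ∈ f i then Γ₂ else Γ₁ with hh
  have hhrat : ∀ i, Rational R w₀ Γ (h i) := fun i => by
    by_cases hc : Φ ∈ f i <;> simp [hh, hc, hΓ₁, hΓ₂]
  have hkey : {i | Φ ∈ f i} = {i | MF.neg Φ ∈ h i} := by
    ext i
    by_cases hc : Φ ∈ f i <;> simp [hh, hc]
    · exact hΦ₂
    · intro hn; exact hcons Γ₁ hΓ₁.2.2 ⟨hΦ₁, hn⟩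
  have h1 := hPNN f h hf hhrat Φ hΦ hkey
  have h2 := hPNN g h hg hhrat Φ hΦ (hset.symm.trans hkey)
  exact h1.trans h2.symm
end

section
/- Under the hypotheses of the dictatorship theorem (Unanimity, Positive-Negative Neutrality, extension of consistent sets to rational sets), if Φ <₀ Ψ, A is a decisive coalition for Φ, and A ⊆ B ⊆ N, then B is a decisive coalition for Ψ. -/
/-- `Δ` is minimally inconsistent: a subset of `Δ` is inconsistent iff it equals `Δ`. -/
def MinInconsistent {W : Type} (R : W → W → Prop) (w₀ : W) (Δ : Set MF) : Prop :=
  ∀ Δ₀ ⊆ Δ, (¬ Consistent R w₀ Δ₀ ↔ Δ₀ = Δ)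

/-- A modal formula contains no negation operator. -/
def NegFree : MF → Prop
  | MF.var => True
  | MF.neg _ => False
  | MF.box φ => NegFree φ
  | MF.dia φ => NegFree φ

/-- The relation `Φ <₀ Ψ`: some `Γ₀ ⊆ Γ` makes `Γ₀ ∪ {Φ, ¬Ψ}` minimally
inconsistent while `Γ₀ ∪ {¬Φ, Ψ}` is consistent. -/
def Lt0 {W : Type} (R : W → W → Prop) (w₀ : W) (Γ : Set MF) (Φ Ψ : MF) : Prop :=
  ∃ Γ₀ ⊆ Γ, MinInconsistent R w₀ (Γ₀ ∪ {Φ, MF.neg Ψ}) ∧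
    Consistent R w₀ (Γ₀ ∪ {MF.neg Φ, Ψ})


lemma cons_mono {W : Type} {R : W → W → Prop} {w₀ : W} {Δ₀ Δ : Set MF}
    (h : Consistent R w₀ Δ) (hs : Δ₀ ⊆ Δ) : Consistent R w₀ Δ₀ := by
  obtain ⟨V, hV⟩ := h
  exact ⟨V, fun φ hφ => hV φ (hs hφ)⟩

lemma not_both {W : Type} {R : W → W → Prop} {w₀ : W} {Δ : Set MF}
    (h : Consistent R w₀ Δ) {χ : MF} (h1 : χ ∈ Δ) : MF.neg χ ∉ Δ := by
  intro h2
  obtain ⟨V, hV⟩ := h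
  exact (hV _ h2) (hV _ h1)

lemma negfree_ne {χ ψ : MF} (h : NegFree χ) : χ ≠ MF.neg ψ := by
  cases χ <;> simp_all [NegFree]

/-- Coalition `A` is decisive for `Φ` under `F`. -/
def Decisive {W N : Type} (R : W → W → Prop) (w₀ : W) (Γ : Set MF)
    (F : (N → Set MF) → Set MF) (Φ : MF) (A : Set N) : Prop :=
  ∀ f : N → Set MF, (∀ i, Rational R w₀ Γ (f i)) → {i | Φ ∈ f i} = A → Φ ∈ F f

theorem stmt17 {W N : Type} [Fintype N] (hN : 2 ≤ Fintype.card N)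
    (R : W → W → Prop) (w₀ : W) (Γ : Set MF)
    (hneg : ∀ Φ ∈ Γ, MF.neg Φ ∈ Γ)
    (hext : ∀ Γ₀ ⊆ Γ, Consistent R w₀ Γ₀ → ∃ Γ₁, Γ₀ ⊆ Γ₁ ∧ Rational R w₀ Γ Γ₁)
    (F : (N → Set MF) → Set MF)
    (hF : ∀ f : N → Set MF, (∀ i, Rational R w₀ Γ (f i)) → Rational R w₀ Γ (F f))
    (hUna : ∀ f : N → Set MF, (∀ i, Rational R w₀ Γ (f i)) →
      ∀ Φ ∈ Γ, (∀ i, Φ ∈ f i) → Φ ∈ F f)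
    (hPNN : ∀ f g : N → Set MF, (∀ i, Rational R w₀ Γ (f i)) →
      (∀ i, Rational R w₀ Γ (g i)) → ∀ Φ ∈ Γ,
      {i | Φ ∈ f i} = {i | MF.neg Φ ∈ g i} → (Φ ∈ F f ↔ MF.neg Φ ∈ F g))
    (Φ Ψ : MF) (hΦ : Φ ∈ Γ) (hΨ : Ψ ∈ Γ) (hΦn : NegFree Φ) (hΨn : NegFree Ψ)
    (hlt : Lt0 R w₀ Γ Φ Ψ)
    (A B : Set N) (hdec : Decisive R w₀ Γ F Φ A) (hAB : A ⊆ B) :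
    Decisive R w₀ Γ F Ψ B := by
  classical
  obtain ⟨Γ₀, hΓ₀Γ, hmin, hconsM⟩ := hlt
  have hnΦΓ : MF.neg Φ ∈ Γ := hneg Φ hΦ
  have hnΨΓ : MF.neg Ψ ∈ Γ := hneg Ψ hΨ
  -- membership helpers for the two key sets
  have hΦmem : Φ ∈ Γ₀ ∪ {Φ, MF.neg Ψ} := Or.inr (Or.inl rfl)
  have hnΨmem : MF.neg Ψ ∈ Γ₀ ∪ {Φ, MF.neg Ψ} := Or.inr (Or.inr rfl)
  have hnΦmemM : MF.neg Φ ∈ Γ₀ ∪ {MF.neg Φ, Ψ} := Or.inr (Or.inl rfl)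
  have hΨmemM : Ψ ∈ Γ₀ ∪ {MF.neg Φ, Ψ} := Or.inr (Or.inr rfl)
  -- Φ ∉ Γ₀ and ¬Ψ ∉ Γ₀
  have hΦΓ₀ : Φ ∉ Γ₀ := fun h =>
    not_both hconsM (Or.inl h) hnΦmemM
  have hnΨΓ₀ : MF.neg Ψ ∉ Γ₀ := fun h =>
    not_both hconsM hΨmemM (Or.inl h)
  -- the whole set is inconsistent
  have hXincons : ¬ Consistent R w₀ (Γ₀ ∪ {Φ, MF.neg Ψ}) :=
    (hmin _ (le_refl _)).mpr rfl
  -- Γ₀ ∪ {Φ} is consistent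
  have hsubΦ : Γ₀ ∪ {Φ} ⊆ Γ₀ ∪ {Φ, MF.neg Ψ} := by
    intro x hx
    rcases hx with hx | hx
    · exact Or.inl hx
    · exact Or.inr (Or.inl hx)
  have hconsΦ : Consistent R w₀ (Γ₀ ∪ {Φ}) := by
    by_contra hno
    have heq := (hmin _ hsubΦ).mp hno
    have : MF.neg Ψ ∈ Γ₀ ∪ {Φ} := heq ▸ hnΨmem
    rcases this with h | h
    · exact hnΨΓ₀ h
    · exact negfree_ne hΦn h.symm
  -- Γ₀ ∪ {¬Ψ} is consistent
  have hsubnΨ : Γ₀ ∪ {MF.neg Ψ} ⊆ Γ₀ ∪ {Φ, MF.neg Ψ} := by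
    intro x hx
    rcases hx with hx | hx
    · exact Or.inl hx
    · exact Or.inr (Or.inr hx)
  have hconsnΨ : Consistent R w₀ (Γ₀ ∪ {MF.neg Ψ}) := by
    by_contra hno
    have heq := (hmin _ hsubnΨ).mp hno
    have : Φ ∈ Γ₀ ∪ {MF.neg Ψ} := heq ▸ hΦmem
    rcases this with h | h
    · exact hΦΓ₀ h
    · exact negfree_ne hΦn h
  -- Γ₀ ∪ {Φ, Ψ} is consistent
  have hconsA : Consistent R w₀ (Γ₀ ∪ {Φ, Ψ}) := by
    obtain ⟨V, hV⟩ := hconsΦ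
    have hSatΨ : Sat R V w₀ Ψ := by
      by_contra hno
      apply hXincons
      refine ⟨V, fun φ hφ => ?_⟩
      rcases hφ with h | h | h
      · exact hV _ (Or.inl h)
      · exact h ▸ hV _ (Or.inr rfl)
      · subst h; exact hno
    refine ⟨V, fun φ hφ => ?_⟩
    rcases hφ with h | h | h
    · exact hV _ (Or.inl h)
    · exact h ▸ hV _ (Or.inr rfl)
    · subst h; exact hSatΨ
  -- Γ₀ ∪ {¬Φ, ¬Ψ} is consistent
  have hconsO : Consistent R w₀ (Γ₀ ∪ {MF.neg Φ, MF.neg Ψ}) := by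
    obtain ⟨V, hV⟩ := hconsnΨ
    have hSatnΦ : ¬ Sat R V w₀ Φ := by
      intro hyes
      apply hXincons
      refine ⟨V, fun φ hφ => ?_⟩
      rcases hφ with h | h | h
      · exact hV _ (Or.inl h)
      · subst h; exact hyes
      · exact h ▸ hV _ (Or.inr rfl)
    refine ⟨V, fun φ hφ => ?_⟩
    rcases hφ with h | h | h
    · exact hV _ (Or.inl h)
    · subst h; exact hSatnΦ
    · exact h ▸ hV _ (Or.inr rfl)
  -- subset-of-Γ facts
  have hsubΓA : Γ₀ ∪ {Φ, Ψ} ⊆ Γ := by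
    intro x hx
    rcases hx with h | h | h
    · exact hΓ₀Γ h
    · exact h ▸ hΦ
    · exact h ▸ hΨ
  have hsubΓM : Γ₀ ∪ {MF.neg Φ, Ψ} ⊆ Γ := by
    intro x hx
    rcases hx with h | h | h
    · exact hΓ₀Γ h
    · exact h ▸ hnΦΓ
    · exact h ▸ hΨ
  have hsubΓO : Γ₀ ∪ {MF.neg Φ, MF.neg Ψ} ⊆ Γ := by
    intro x hx
    rcases hx with h | h | h
    · exact hΓ₀Γ h
    · exact h ▸ hnΦΓ
    · exact h ▸ hnΨΓ
  -- rational extensions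
  obtain ⟨ΔA, hΔAs, hΔAr⟩ := hext _ hsubΓA hconsA
  obtain ⟨ΔM, hΔMs, hΔMr⟩ := hext _ hsubΓM hconsM
  obtain ⟨ΔO, hΔOs, hΔOr⟩ := hext _ hsubΓO hconsO
  obtain ⟨ΔP, hΔPs, hΔPr⟩ := hext {Ψ} (by intro x hx; exact hx ▸ hΨ)
    (cons_mono hconsA (fun x hx => Or.inr (Or.inr hx)))
  obtain ⟨ΔN, hΔNs, hΔNr⟩ := hext {MF.neg Ψ} (by intro x hx; exact hx ▸ hnΨΓ)
    (cons_mono hconsnΨ (fun x hx => Or.inr hx))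
  have hΨP : Ψ ∈ ΔP := hΔPs rfl
  have hnΨN : MF.neg Ψ ∈ ΔN := hΔNs rfl
  have hnΨP : MF.neg Ψ ∉ ΔP := not_both hΔPr.2.2 hΨP
  have hΨN : Ψ ∉ ΔN := fun h => not_both hΔNr.2.2 h hnΨN
  -- Independence for Ψ
  have hindep : ∀ f g : N → Set MF, (∀ i, Rational R w₀ Γ (f i)) →
      (∀ i, Rational R w₀ Γ (g i)) → {i | Ψ ∈ f i} = {i | Ψ ∈ g i} →
      (Ψ ∈ F f ↔ Ψ ∈ F g) := by
    intro f g hf hg hfg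
    set h : N → Set MF := fun i => if Ψ ∈ f i then ΔN else ΔP with hh
    have hhr : ∀ i, Rational R w₀ Γ (h i) := by
      intro i
      by_cases hi : Ψ ∈ f i <;> simp [hh, hi, hΔNr, hΔPr]
    have hset : {i | MF.neg Ψ ∈ h i} = {i | Ψ ∈ f i} := by
      ext i
      by_cases hi : Ψ ∈ f i <;> simp [hh, hi, hnΨN, hnΨP]
    have h1 := hPNN f h hf hhr Ψ hΨ hset.symm
    have h2 := hPNN g h hg hhr Ψ hΨ (hfg ▸ hset.symm)
    exact h1.trans h2.symm
  -- the constructed profile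
  intro f hf hfB
  set g : N → Set MF := fun i => if i ∈ A then ΔA else if i ∈ B then ΔM else ΔO with hg
  have hgr : ∀ i, Rational R w₀ Γ (g i) := by
    intro i
    by_cases hiA : i ∈ A
    · simp [hg, hiA, hΔAr]
    · by_cases hiB : i ∈ B <;> simp [hg, hiA, hiB, hΔMr, hΔOr]
  have hΦA : Φ ∈ ΔA := hΔAs (Or.inr (Or.inl rfl))
  have hΨA : Ψ ∈ ΔA := hΔAs (Or.inr (Or.inr rfl))
  have hnΦM : MF.neg Φ ∈ ΔM := hΔMs (Or.inr (Or.inl rfl))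
  have hΨM : Ψ ∈ ΔM := hΔMs (Or.inr (Or.inr rfl))
  have hnΦO : MF.neg Φ ∈ ΔO := hΔOs (Or.inr (Or.inl rfl))
  have hnΨO : MF.neg Ψ ∈ ΔO := hΔOs (Or.inr (Or.inr rfl))
  have hΦM : Φ ∉ ΔM := fun h => not_both hΔMr.2.2 h hnΦM
  have hΦO : Φ ∉ ΔO := fun h => not_both hΔOr.2.2 h hnΦO
  have hΨO : Ψ ∉ ΔO := fun h => not_both hΔOr.2.2 h hnΨO
  have hgΦ : {i | Φ ∈ g i} = A := by
    ext i
    by_cases hiA : i ∈ A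
    · simp [hg, hiA, hΦA]
    · by_cases hiB : i ∈ B <;> simp [hg, hiA, hiB, hΦM, hΦO]
  have hgΨ : {i | Ψ ∈ g i} = B := by
    ext i
    by_cases hiA : i ∈ A
    · simp [hg, hiA, hΨA, hAB hiA]
    · by_cases hiB : i ∈ B <;> simp [hg, hiA, hiB, hΨM, hΨO]
  -- Φ ∈ F g by decisiveness, Γ₀ ⊆ F g by unanimity
  have hΦFg : Φ ∈ F g := hdec g hgr hgΦ
  have hΓ₀Fg : ∀ γ ∈ Γ₀, γ ∈ F g := by
    intro γ hγ
    refine hUna g hgr γ (hΓ₀Γ hγ) fun i => ?_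
    by_cases hiA : i ∈ A
    · simp [hg, hiA]; exact hΔAs (Or.inl hγ)
    · by_cases hiB : i ∈ B <;> simp [hg, hiA, hiB]
      · exact hΔMs (Or.inl hγ)
      · exact hΔOs (Or.inl hγ)
  have hFgr := hF g hgr
  -- ¬Ψ ∉ F g, hence Ψ ∈ F g
  have hnΨFg : MF.neg Ψ ∉ F g := by
    intro h
    apply hXincons
    refine cons_mono hFgr.2.2 ?_
    intro x hx
    rcases hx with hx | hx | hx
    · exact hΓ₀Fg _ hx
    · exact hx ▸ hΦFg
    · exact hx ▸ h
  have hΨFg : Ψ ∈ F g := by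
    rcases hFgr.2.1 Ψ hΨ with h | h
    · exact h
    · exact absurd h hnΨFg
  exact (hindep f g hf hgr (hfB.trans hgΨ.symm)).mpr hΨFg
end
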